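/- arXiv:1912.03097 — 5 statements merged into one kernel-verified Lean document; each statement's English description precedes it below -/
import Mathlib

section
/- For 0 < λa < 1, the characteristic polynomial of the O3 scheme has the three simple roots κ_± = [-(1+λa)(5-2λa) ± √((1+λa)(33-15λa))] / [2(1-λa)(2-λa)] and κ_0 = 1, and moreover |κ_-| > 1 while |κ_+| < 1. -/
/-!
With `s = λa`, the characteristic polynomial factors as `A(X) = -(s/6) (X - 1) q(X)` with
`q(X) = (1-s)(2-s) X² + (1+s)(5-2s) X - (1-s)(1+s)`, whose discriminant is `(1+s)(33-15s)`;
so `κ₋ ≤ κ₊` are the roots of `q` by the quadratic formula. Since `q` has positive leading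
coefficient and `q(-1) = 2(2s+1)(s-2) < 0 < 6 = q(1)`, they satisfy `κ₋ < -1 < κ₊ < 1`.
-/

open Complex

theorem quadratic_eq_mul_sub_mul_sub {K : Type*} [Field K] [NeZero (2 : K)] {a b c δ : K}
    (ha : a ≠ 0) (h : discrim a b c = δ * δ) (x : K) :
    a * x ^ 2 + b * x + c = a * (x - (-b - δ) / (2 * a)) * (x - (-b + δ) / (2 * a)) := by
  rw [discrim] at h
  field_simp
  linear_combination -h

theorem mem_Ioo_of_mul_sub_mul_sub_neg {a r t x : ℝ} (ha : 0 < a) (hrt : r ≤ t)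
    (h : a * (x - r) * (x - t) < 0) : x ∈ Set.Ioo r t := by
  rw [mul_assoc] at h
  rcases mul_neg_iff.1 (neg_of_mul_neg_right h ha.le) with ⟨hr, ht⟩ | ⟨hr, ht⟩
  · exact ⟨by linarith, by linarith⟩
  · linarith

theorem lt_of_mul_sub_mul_sub_pos {a r t x : ℝ} (ha : 0 < a) (hrx : r < x)
    (h : 0 < a * (x - r) * (x - t)) : t < x :=
  sub_pos.1 (pos_of_mul_pos_right h (mul_pos ha (sub_pos.2 hrx)).le)

namespace O3

noncomputable def kappaMinus (s : ℝ) : ℝ :=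
  (-(1 + s) * (5 - 2 * s) - √((1 + s) * (33 - 15 * s))) / (2 * (1 - s) * (2 - s))

noncomputable def kappaPlus (s : ℝ) : ℝ :=
  (-(1 + s) * (5 - 2 * s) + √((1 + s) * (33 - 15 * s))) / (2 * (1 - s) * (2 - s))

theorem discrim_quadFactor (s : ℝ) :
    discrim ((1 - s) * (2 - s)) ((1 + s) * (5 - 2 * s)) (-((1 - s) * (1 + s)))
      = (1 + s) * (33 - 15 * s) := by
  rw [discrim]; ring

variable {s : ℝ}

theorem kappaMinus_le_kappaPlus (hs : s < 1) : kappaMinus s ≤ kappaPlus s := by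
  unfold kappaMinus kappaPlus
  gcongr
  · nlinarith
  · linarith [Real.sqrt_nonneg ((1 + s) * (33 - 15 * s))]

theorem quadFactor_eq_mul (hs₀ : -1 ≤ s) (hs₁ : s < 1) (z : ℂ) :
    (((1 - s) * (2 - s) : ℝ) : ℂ) * z ^ 2 + (((1 + s) * (5 - 2 * s) : ℝ) : ℂ) * z
        + ((-((1 - s) * (1 + s)) : ℝ) : ℂ)
      = (((1 - s) * (2 - s) : ℝ) : ℂ) * (z - kappaMinus s) * (z - kappaPlus s) := by
  have hA : ((1 - s) * (2 - s) : ℝ) ≠ 0 := by nlinarith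
  have hD : discrim ((1 - s) * (2 - s) : ℝ) ((1 + s) * (5 - 2 * s)) (-((1 - s) * (1 + s)))
      = √((1 + s) * (33 - 15 * s)) * √((1 + s) * (33 - 15 * s)) := by
    rw [discrim_quadFactor, Real.mul_self_sqrt (by nlinarith)]
  have hDC : discrim (((1 - s) * (2 - s) : ℝ) : ℂ) (((1 + s) * (5 - 2 * s) : ℝ) : ℂ)
      ((-((1 - s) * (1 + s)) : ℝ) : ℂ)
      = (√((1 + s) * (33 - 15 * s)) : ℂ) * (√((1 + s) * (33 - 15 * s)) : ℂ) := by
    unfold discrim at hD ⊢; exact_mod_cast hD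
  rw [quadratic_eq_mul_sub_mul_sub (ofReal_ne_zero.2 hA) hDC z, kappaMinus, kappaPlus]
  push_cast
  ring

theorem quadFactor_eq_mul_real (hs₀ : -1 ≤ s) (hs₁ : s < 1) (x : ℝ) :
    (1 - s) * (2 - s) * x ^ 2 + (1 + s) * (5 - 2 * s) * x + -((1 - s) * (1 + s))
      = (1 - s) * (2 - s) * (x - kappaMinus s) * (x - kappaPlus s) := by
  exact_mod_cast quadFactor_eq_mul hs₀ hs₁ x

theorem kappaMinus_lt_neg_one_lt_kappaPlus (hs₀ : 0 < s) (hs₁ : s < 1) :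
    kappaMinus s < -1 ∧ -1 < kappaPlus s := by
  apply mem_Ioo_of_mul_sub_mul_sub_neg (a := (1 - s) * (2 - s)) (by nlinarith)
    (kappaMinus_le_kappaPlus hs₁)
  rw [← quadFactor_eq_mul_real (by linarith) hs₁]
  nlinarith

theorem kappaPlus_lt_one (hs₀ : 0 < s) (hs₁ : s < 1) : kappaPlus s < 1 := by
  refine lt_of_mul_sub_mul_sub_pos (a := (1 - s) * (2 - s)) (by nlinarith)
    ((kappaMinus_lt_neg_one_lt_kappaPlus hs₀ hs₁).1.trans (by norm_num)) ?_
  rw [← quadFactor_eq_mul_real (by linarith) hs₁]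
  nlinarith

theorem charPoly_eq (s : ℝ) (z : ℂ) :
    ((-(s * (1 - s ^ 2)) / 6 : ℝ) : ℂ) + ((s * (1 + s) * (2 - s) / 2 : ℝ) : ℂ) * z
        + (((1 - s ^ 2) * (2 - s) / 2 : ℝ) : ℂ) * z ^ 2
        + ((-(s * (1 - s) * (2 - s)) / 6 : ℝ) : ℂ) * z ^ 3 - z ^ 2
      = -((s : ℂ) / 6) * (z - 1) * ((((1 - s) * (2 - s) : ℝ) : ℂ) * z ^ 2
          + (((1 + s) * (5 - 2 * s) : ℝ) : ℂ) * z + ((-((1 - s) * (1 + s)) : ℝ) : ℂ)) := by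
  push_cast
  ring

end O3

theorem O3_characteristic_roots_general (a lam : ℝ)
    (h1 : 0 < lam * a) (h2 : lam * a < 1) :
    let κm : ℝ := (-(1 + lam * a) * (5 - 2 * (lam * a))
        - Real.sqrt ((1 + lam * a) * (33 - 15 * (lam * a))))
        / (2 * (1 - lam * a) * (2 - lam * a))
    let κp : ℝ := (-(1 + lam * a) * (5 - 2 * (lam * a))
        + Real.sqrt ((1 + lam * a) * (33 - 15 * (lam * a))))
        / (2 * (1 - lam * a) * (2 - lam * a))
    (∀ z : ℂ,
        ((-(lam * a * (1 - (lam * a) ^ 2)) / 6 : ℝ) : ℂ)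
          + ((lam * a * (1 + lam * a) * (2 - lam * a) / 2 : ℝ) : ℂ) * z
          + (((1 - (lam * a) ^ 2) * (2 - lam * a) / 2 : ℝ) : ℂ) * z ^ 2
          + ((-(lam * a * (1 - lam * a) * (2 - lam * a)) / 6 : ℝ) : ℂ) * z ^ 3
          - z ^ 2
        = ((-(lam * a * (1 - lam * a) * (2 - lam * a)) / 6 : ℝ) : ℂ)
            * (z - (κm : ℂ)) * (z - (κp : ℂ)) * (z - 1))
      ∧ κm ≠ κp ∧ κm ≠ 1 ∧ κp ≠ 1 ∧ 1 < |κm| ∧ |κp| < 1 := by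
  intro κm κp
  rw [show κm = O3.kappaMinus (lam * a) from rfl, show κp = O3.kappaPlus (lam * a) from rfl]
  obtain ⟨hm_lt, hp_gt⟩ := O3.kappaMinus_lt_neg_one_lt_kappaPlus h1 h2
  have hp_lt := O3.kappaPlus_lt_one h1 h2
  refine ⟨fun z => ?_, by linarith, by linarith, hp_lt.ne, ?_, abs_lt.2 ⟨hp_gt, hp_lt⟩⟩
  · rw [O3.charPoly_eq, O3.quadFactor_eq_mul (by linarith) h2]
    push_cast
    ring
  · exact lt_abs.2 (Or.inr (by linarith))

/-- For `0 < λa < 1`, the characteristic polynomial of the O3 scheme factorizes with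
the three simple roots `κ₋`, `κ₊` and `1`, which are pairwise distinct, and moreover
`|κ₋| > 1` while `|κ₊| < 1`. -/
theorem O3_characteristic_roots (a lam : ℝ) (ha : 0 < a)
    (h1 : 0 < lam * a) (h2 : lam * a < 1) :
    let κm : ℝ := (-(1 + lam * a) * (5 - 2 * (lam * a))
        - Real.sqrt ((1 + lam * a) * (33 - 15 * (lam * a))))
        / (2 * (1 - lam * a) * (2 - lam * a))
    let κp : ℝ := (-(1 + lam * a) * (5 - 2 * (lam * a))
        + Real.sqrt ((1 + lam * a) * (33 - 15 * (lam * a))))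
        / (2 * (1 - lam * a) * (2 - lam * a))
    (∀ z : ℂ,
        ((-(lam * a * (1 - (lam * a) ^ 2)) / 6 : ℝ) : ℂ)
          + ((lam * a * (1 + lam * a) * (2 - lam * a) / 2 : ℝ) : ℂ) * z
          + (((1 - (lam * a) ^ 2) * (2 - lam * a) / 2 : ℝ) : ℂ) * z ^ 2
          + ((-(lam * a * (1 - lam * a) * (2 - lam * a)) / 6 : ℝ) : ℂ) * z ^ 3
          - z ^ 2
        = ((-(lam * a * (1 - lam * a) * (2 - lam * a)) / 6 : ℝ) : ℂ)
            * (z - (κm : ℂ)) * (z - (κp : ℂ)) * (z - 1))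
      ∧ κm ≠ κp ∧ κm ≠ 1 ∧ κp ≠ 1 ∧ 1 < |κm| ∧ |κp| < 1 :=
  O3_characteristic_roots_general a lam h1 h2
end

section
/- Counting of unstable roots: suppose the coefficients a_{-r},...,a_p with a_{-r}a_p ≠ 0 satisfy the ℓ²-stability condition sup_θ |Σ_ℓ a_ℓ e^{iℓθ}| ≤ 1, the consistency conditions of order ≥ 1 with λa > 0, and the characteristic polynomial A(X) = Σ_ℓ a_ℓ X^{ℓ+r} - X^r has exactly one root on the unit circle, namely 1. Then the sum of multiplicities of the roots of A lying strictly outside the closed unit disk equals p. -/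
/-!
Write `A = B - X ^ r`, where `‖B‖ ≤ 1` on the unit circle. For `s > 0`, Rouché's theorem shows that
`A - s X ^ r = B - (1 + s) X ^ r` has exactly `r` roots in the open unit disk, and, for `s` small,
as many roots as `A` in a disk of radius `R > 1` that contains no root of `A` outside the closed
unit disk. Since `A'(1) = -λa < 0`, the perturbation moves the simple root `1` into the unit disk,
and it creates no root elsewhere in `1 ≤ ‖z‖ < R`, where `‖A‖` is bounded below. So `A` has `r`
roots in the closed unit disk, and the remaining `deg A - r = p` lie outside it.
-/

open Polynomial Finset Complex Metric Filter Topology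

namespace circleIntegral

theorem integral_sub_inv_of_notMem_sphere {c w : ℂ} {R : ℝ} (hR : 0 < R) (hw : w ∉ sphere c R) :
    (∮ z in C(c, R), (z - w)⁻¹) = if dist w c < R then 2 * Real.pi * I else 0 := by
  split_ifs with hball
  · exact integral_sub_inv_of_mem_ball hball
  · have hw' : w ∉ closedBall c R := fun h =>
      hw (mem_sphere.2 (le_antisymm (mem_closedBall.1 h) (not_lt.1 hball)))
    refine DiffContOnCl.circleIntegral_eq_zero hR.le
      (DifferentiableOn.diffContOnCl ?_)
    rw [closure_ball c hR.ne']
    exact (differentiableOn_id.sub_const w).inv fun z hz h0 => hw' (sub_eq_zero.1 h0 ▸ hz)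

theorem integral_multiset_sum_sub_inv {c : ℂ} {R : ℝ} (hR : 0 < R) (s : Multiset ℂ)
    (hs : ∀ w ∈ s, w ∉ sphere c R) :
    (∮ z in C(c, R), (s.map fun w => (z - w)⁻¹).sum)
      = 2 * Real.pi * I * Multiset.card (s.filter fun w => dist w c < R) := by
  induction s using Multiset.induction with
  | empty => simp [circleIntegral]
  | cons w s ih =>
    have hw := hs w (Multiset.mem_cons_self w s)
    have hs' := fun v hv => hs v (Multiset.mem_cons_of_mem hv)
    have hint : CircleIntegrable (fun z => (s.map fun w => (z - w)⁻¹).sum) c R := by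
      refine ContinuousOn.circleIntegrable hR.le (continuousOn_multiset_sum _ fun v hv => ?_)
      exact (continuous_sub_right v).continuousOn.inv₀ fun z hz h0 =>
        hs' v hv (sub_eq_zero.1 h0 ▸ hz)
    simp only [Multiset.map_cons, Multiset.sum_cons, Multiset.filter_cons]
    rw [integral_add (circleIntegrable_sub_inv_iff.2 (Or.inr (by rwa [abs_of_pos hR]))) hint,
      integral_sub_inv_of_notMem_sphere hR hw, ih hs']
    split_ifs <;> simp only [Multiset.card_add, Multiset.card_singleton, Multiset.card_zero] <;>
      push_cast <;> ring

end circleIntegral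

theorem Complex.norm_one_add_lt_one_of_re_inv_lt {δ : ℂ} (h : δ⁻¹.re < -1 / 2) : ‖1 + δ‖ < 1 := by
  have hδ : δ ≠ 0 := by rintro rfl; norm_num at h
  rw [inv_re, div_lt_iff₀ (normSq_pos.2 hδ), normSq_apply] at h
  rw [← sq_lt_one_iff₀ (norm_nonneg _), Complex.sq_norm, normSq_apply]
  simp only [add_re, one_re, add_im, one_im, zero_add]
  nlinarith

theorem Finset.exists_gt_forall_le_or_lt {α : Type*} [LinearOrder α] [TopologicalSpace α]
    [OrderTopology α] [DenselyOrdered α] [NoMaxOrder α] (s : Finset α) (a : α) :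
    ∃ b > a, ∀ x ∈ s, x ≤ a ∨ b < x := by
  have : ∀ᶠ b in 𝓝[>] a, ∀ x ∈ s, x ≤ a ∨ b < x := (eventually_all_finset s).2 fun x _ => by
    rcases le_or_gt x a with h | h
    · exact .of_forall fun _ => .inl h
    · exact ((eventually_lt_nhds h).filter_mono nhdsWithin_le_nhds).mono fun _ => .inr
  exact (this.and self_mem_nhdsWithin).exists.imp fun b h => ⟨h.2, h.1⟩

namespace Polynomial

variable (A : ℂ[X]) (r : ℕ)

theorem circleIntegral_eval_derivative_div_eval (P : ℂ[X]) {c : ℂ} {R : ℝ} (hR : 0 < R)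
    (hP : ∀ z ∈ sphere c R, ¬P.IsRoot z) :
    (∮ z in C(c, R), P.derivative.eval z / P.eval z)
      = 2 * Real.pi * I * Multiset.card (P.roots.filter fun w => dist w c < R) := by
  have hP0 : P ≠ 0 := by
    rintro rfl
    obtain ⟨z, hz⟩ := (NormedSpace.sphere_nonempty (x := c)).2 hR.le
    exact hP z hz (by simp)
  rw [← circleIntegral.integral_multiset_sum_sub_inv hR _
    fun w hw hws => hP w hws ((mem_roots hP0).1 hw)]
  refine circleIntegral.integral_congr hR.le fun z hz => ?_
  simp only [(IsAlgClosed.splits P).eval_derivative_div_eval_of_ne_zero (hP z hz), one_div]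

theorem card_roots_filter_dist_lt_eq_of_norm_sub_lt (P Q : ℂ[X]) {c : ℂ} {R : ℝ} (hR : 0 < R)
    (h : ∀ z ∈ sphere c R, ‖P.eval z - Q.eval z‖ < ‖Q.eval z‖) :
    Multiset.card (P.roots.filter fun w => dist w c < R)
      = Multiset.card (Q.roots.filter fun w => dist w c < R) := by
  have hQ : ∀ z ∈ sphere c R, Q.eval z ≠ 0 := fun z hz h0 => by
    simpa [h0] using (norm_nonneg _).trans_lt (h z hz)
  have hP : ∀ z ∈ sphere c R, P.eval z ≠ 0 := fun z hz h0 => by simpa [h0] using h z hz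
  have hslit : ∀ z ∈ sphere c R, P.eval z / Q.eval z ∈ slitPlane := fun z hz => by
    have hlt : ‖P.eval z / Q.eval z - 1‖ < 1 := by
      rw [div_sub_one (hQ z hz), norm_div, div_lt_one (norm_pos_iff.2 (hQ z hz))]
      exact h z hz
    simpa using mem_slitPlane_of_norm_lt_one hlt
  -- `log (P / Q)` is a primitive of `P' / P - Q' / Q` along the circle.
  have hprim : (∮ z in C(c, R), (P.derivative.eval z / P.eval z - Q.derivative.eval z / Q.eval z))
      = 0 := by
    refine circleIntegral.integral_eq_zero_of_hasDerivWithinAt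
      (f := fun z => log (P.eval z / Q.eval z)) hR.le fun z hz => ?_
    have := ((P.hasDerivAt z).div (Q.hasDerivAt z) (hQ z hz)).clog (hslit z hz)
    simp only [Pi.div_apply] at this
    convert this.hasDerivWithinAt using 1
    field_simp [hP z hz, hQ z hz]
  have hint : ∀ S : ℂ[X], (∀ z ∈ sphere c R, S.eval z ≠ 0) →
      CircleIntegrable (fun z => S.derivative.eval z / S.eval z) c R := fun S hS =>
    (S.derivative.continuous.continuousOn.div S.continuous.continuousOn hS).circleIntegrable hR.le
  rw [circleIntegral.integral_sub (hint P hP) (hint Q hQ),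
    circleIntegral_eval_derivative_div_eval P hR hP,
    circleIntegral_eval_derivative_div_eval Q hR hQ, sub_eq_zero] at hprim
  exact_mod_cast mul_left_cancel₀ two_pi_I_ne_zero hprim

theorem exists_norm_lt_one_of_eval_eq_mul_pow (h1 : A.IsRoot 1)
    (hA' : (A.derivative.eval 1).re < 0) :
    ∃ c > 0, ∀ᶠ z in 𝓝 (1 : ℂ), ∀ s : ℝ, 0 < s → s < c → A.eval z = s * z ^ r → ‖z‖ < 1 := by
  obtain ⟨Q, hQ⟩ := dvd_iff_isRoot.2 h1
  have hQ1 : (Q.eval 1).re < 0 := by simpa [hQ, derivative_mul] using hA'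
  have hcont : ContinuousAt (fun z : ℂ => (Q.eval z / z ^ r).re) 1 := by
    fun_prop (disch := simp)
  refine ⟨-(Q.eval 1).re, by linarith, ?_⟩
  have h1lt : (Q.eval 1 / 1 ^ r).re < (Q.eval 1).re / 2 := by
    rw [one_pow, div_one]; linarith
  filter_upwards [hcont.eventually (gt_mem_nhds h1lt)] with z hz s hs hsc hAz
  have hzr : z ^ r ≠ 0 := by rintro h; simp [h] at hz; linarith
  have hzeq : (z - 1) * Q.eval z = s * z ^ r := by rw [← hAz, hQ]; simp
  have hz1 : z - 1 ≠ 0 := by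
    rintro h
    rw [h, zero_mul, eq_comm, mul_eq_zero] at hzeq
    exact hzeq.elim (by exact_mod_cast hs.ne') hzr
  -- `(z - 1)⁻¹ = Q z / (s z ^ r)` lies in the half-plane `re < -1/2`, which inversion maps into
  -- the disk `‖1 + δ‖ < 1`.
  have hinv : (z - 1)⁻¹.re < -1 / 2 := by
    have : (z - 1)⁻¹ = (Q.eval z / z ^ r) / s := by
      rw [eq_div_iff (ofReal_ne_zero.2 hs.ne'), eq_div_iff hzr, mul_assoc, ← hzeq,
        inv_mul_cancel_left₀ hz1]
    rw [this, div_ofReal_re, div_lt_iff₀ hs]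
    linarith
  simpa using norm_one_add_lt_one_of_re_inv_lt hinv

theorem card_roots_norm_lt_one_sub_C_mul_X_pow
    (hB : ∀ z : ℂ, ‖z‖ = 1 → ‖A.eval z + z ^ r‖ ≤ 1) {s : ℝ} (hs : 0 < s) :
    Multiset.card ((A - C (s : ℂ) * X ^ r).roots.filter fun z => ‖z‖ < 1) = r := by
  have hs' : -(1 + (s : ℂ)) ≠ 0 := by
    rw [neg_ne_zero]; exact_mod_cast (by linarith : (1 + s) ≠ 0)
  have key := card_roots_filter_dist_lt_eq_of_norm_sub_lt (A - C (s : ℂ) * X ^ r)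
    (C (-(1 + (s : ℂ))) * X ^ r) (c := 0) one_pos fun z hz => by
      rw [mem_sphere_zero_iff_norm] at hz
      have hnorm : ‖-(1 + (s : ℂ))‖ = 1 + s := by
        rw [norm_neg, ← ofReal_one, ← ofReal_add, norm_real, Real.norm_of_nonneg (by linarith)]
      simp only [eval_sub, eval_mul, eval_C, eval_pow, eval_X, norm_mul, norm_pow, hz, hnorm]
      calc ‖A.eval z - s * z ^ r - -(1 + s) * z ^ r‖ = ‖A.eval z + z ^ r‖ := by ring_nf
        _ < 1 + s := (hB z hz).trans_lt (by linarith)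
        _ = _ := by ring
  rw [roots_C_mul_X_pow hs'] at key
  simpa [Multiset.filter_nsmul, Multiset.filter_singleton] using key

theorem exists_pos_le_norm_eval_annulus_sub_ball (hcircle : ∀ z : ℂ, A.IsRoot z → ‖z‖ = 1 → z = 1)
    {R ε : ℝ} (hR : ∀ w ∈ A.roots, ‖w‖ ≤ 1 ∨ R < ‖w‖) (hA : A ≠ 0) (hε : 0 < ε) :
    ∃ m > 0, ∀ z : ℂ, 1 ≤ ‖z‖ → ‖z‖ ≤ R → ε ≤ ‖z - 1‖ → m ≤ ‖A.eval z‖ := by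
  set K : Set ℂ := {z | 1 ≤ ‖z‖ ∧ ‖z‖ ≤ R ∧ ε ≤ ‖z - 1‖}
  have hK : IsCompact K := by
    refine Metric.isCompact_of_isClosed_isBounded ?_
      ((isBounded_closedBall (x := 0) (r := R)).subset fun z hz => by simpa using hz.2.1)
    exact (isClosed_le continuous_const continuous_norm).inter
      ((isClosed_le continuous_norm continuous_const).inter
        (isClosed_le continuous_const (continuous_norm.comp (continuous_sub_right 1))))
  have hKroots : ∀ z ∈ K, 0 < ‖A.eval z‖ := by
    rintro z ⟨hz1, hzR, hzε⟩
    refine norm_pos_iff.2 fun hz => ?_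
    rcases (hR z ((mem_roots hA).2 hz)).imp (le_antisymm · hz1) id with h | h
    · rw [hcircle z hz h, sub_self, norm_zero] at hzε
      linarith
    · linarith
  obtain ⟨m, hm, hmK⟩ := hK.exists_forall_le' A.continuous.norm.continuousOn hKroots
  exact ⟨m, hm, fun z hz1 hzR hzε => hmK z ⟨hz1, hzR, hzε⟩⟩

theorem card_roots_norm_le_one
    (hB : ∀ z : ℂ, ‖z‖ = 1 → ‖A.eval z + z ^ r‖ ≤ 1) (h1 : A.IsRoot 1)
    (hA' : (A.derivative.eval 1).re < 0) (hcircle : ∀ z : ℂ, A.IsRoot z → ‖z‖ = 1 → z = 1) :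
    Multiset.card (A.roots.filter fun z => ‖z‖ ≤ 1) = r := by
  obtain ⟨R, hR1, hR⟩ := (A.roots.toFinset.image (‖·‖)).exists_gt_forall_le_or_lt 1
  replace hR : ∀ w ∈ A.roots, ‖w‖ ≤ 1 ∨ R < ‖w‖ := fun w hw =>
    hR _ (Finset.mem_image_of_mem _ (Multiset.mem_toFinset.2 hw))
  obtain ⟨c, hc, hloc⟩ := A.exists_norm_lt_one_of_eval_eq_mul_pow r h1 hA'
  obtain ⟨ε, hε, hloc⟩ := Metric.eventually_nhds_iff.1 hloc
  obtain ⟨m, hm, hmA⟩ := A.exists_pos_le_norm_eval_annulus_sub_ball hcircle hR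
    (fun h => by simp [h] at hA') (lt_min hε (sub_pos.2 hR1))
  obtain ⟨s, hs, hsc, hsm⟩ : ∃ s : ℝ, 0 < s ∧ s < c ∧ s * R ^ r < m := by
    have hRr : 0 < R ^ r := by positivity
    refine ⟨min c (m / R ^ r) / 2, by positivity, by linarith [min_le_left c (m / R ^ r)], ?_⟩
    rw [← lt_div_iff₀ hRr]
    linarith [min_le_right c (m / R ^ r), div_pos hm hRr]
  set As := A - C (s : ℂ) * X ^ r
  have hAs : ∀ z, As.eval z = A.eval z - s * z ^ r := by simp [As]
  have hsphere : ∀ z ∈ sphere (0 : ℂ) R, ‖As.eval z - A.eval z‖ < ‖A.eval z‖ := by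
    intro z hz
    rw [mem_sphere_zero_iff_norm] at hz
    calc _ = s * R ^ r := by simp [hAs, hz, abs_of_pos hs]
      _ < m := hsm
      _ ≤ _ := hmA z (by linarith) hz.le ((min_le_right _ _).trans
        (by simpa [hz] using norm_sub_norm_le z 1))
  -- The perturbation creates no root in `1 ≤ ‖z‖ < R`: near `1` by the choice of `c` and `ε`,
  -- elsewhere because `‖A‖ ≥ m > s ‖z‖ ^ r` there.
  have hinside : ∀ z ∈ As.roots, dist z 0 < R ↔ ‖z‖ < 1 := by
    intro z hz
    rw [dist_zero_right]
    refine ⟨fun hzR => ?_, fun hz1 => hz1.trans hR1⟩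
    by_contra! hz1
    have hAz : A.eval z = s * z ^ r := by rw [← sub_eq_zero, ← hAs]; exact (mem_roots'.1 hz).2
    by_cases hnear : ‖z - 1‖ < min ε (R - 1)
    · exact hz1.not_gt (hloc (by simpa [dist_eq_norm] using hnear.trans_le (min_le_left _ _))
        s hs hsc hAz)
    · have := hmA z hz1 hzR.le (not_lt.1 hnear)
      rw [hAz, norm_mul, norm_pow, norm_real, Real.norm_of_nonneg hs.le] at this
      nlinarith [pow_le_pow_left₀ (norm_nonneg z) hzR.le r]
  calc Multiset.card (A.roots.filter fun z => ‖z‖ ≤ 1)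
      = Multiset.card (A.roots.filter fun z => dist z 0 < R) := by
        refine congrArg _ (Multiset.filter_congr fun z hz => ?_)
        rw [dist_zero_right]
        rcases hR z hz with h | h
        · exact iff_of_true h (h.trans_lt hR1)
        · exact iff_of_false (by linarith) (by linarith)
    _ = Multiset.card (As.roots.filter fun z => dist z 0 < R) :=
        (card_roots_filter_dist_lt_eq_of_norm_sub_lt _ _ (by linarith) hsphere).symm
    _ = Multiset.card (As.roots.filter fun z => ‖z‖ < 1) :=
        congrArg _ (Multiset.filter_congr hinside)
    _ = r := card_roots_norm_lt_one_sub_C_mul_X_pow A r hB hs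

end Polynomial

noncomputable def shiftedSymbol (r p : ℕ) (a : ℤ → ℂ) : ℂ[X] :=
  ∑ ℓ ∈ Icc (-(r : ℤ)) p, C (a ℓ) * X ^ (ℓ + r).toNat

namespace shiftedSymbol

variable {r p : ℕ} (a : ℤ → ℂ)

theorem eval_of_ne_zero {z : ℂ} (hz : z ≠ 0) :
    (shiftedSymbol r p a).eval z = z ^ r * ∑ ℓ ∈ Icc (-(r : ℤ)) p, a ℓ * z ^ ℓ := by
  simp only [shiftedSymbol, eval_finsetSum, eval_mul, eval_C, eval_pow, eval_X, mul_sum]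
  refine sum_congr rfl fun ℓ hℓ => ?_
  rw [← zpow_natCast, Int.toNat_of_nonneg (by linarith [(mem_Icc.1 hℓ).1]), zpow_add₀ hz,
    zpow_natCast]
  ring

theorem eval_one : (shiftedSymbol r p a).eval 1 = ∑ ℓ ∈ Icc (-(r : ℤ)) p, a ℓ := by
  simp [eval_of_ne_zero a one_ne_zero]

theorem norm_eval_le_one
    (hstab : ∀ θ : ℝ, ‖∑ ℓ ∈ Icc (-(r : ℤ)) p, a ℓ * exp (I * ℓ * θ)‖ ≤ 1) {z : ℂ} (hz : ‖z‖ = 1) :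
    ‖(shiftedSymbol r p a).eval z‖ ≤ 1 := by
  rw [eval_of_ne_zero a (norm_pos_iff.1 (hz ▸ one_pos)), norm_mul, norm_pow, hz, one_pow, one_mul]
  obtain ⟨θ, rfl⟩ : ∃ θ : ℝ, exp (θ * I) = z :=
    ⟨arg z, by simpa [hz] using norm_mul_exp_arg_mul_I z⟩
  convert hstab θ using 4 with ℓ
  rw [← exp_int_mul]
  ring_nf

theorem eval_one_derivative :
    (shiftedSymbol r p a).derivative.eval 1 = ∑ ℓ ∈ Icc (-(r : ℤ)) p, ((ℓ + r : ℤ) : ℂ) * a ℓ := by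
  simp only [shiftedSymbol, derivative_sum, derivative_C_mul_X_pow, eval_finsetSum, eval_mul,
    eval_C, eval_pow, eval_X, one_pow, mul_one]
  refine sum_congr rfl fun ℓ hℓ => ?_
  have h : (((ℓ + r).toNat : ℕ) : ℂ) = ((ℓ + r : ℤ) : ℂ) := by
    exact_mod_cast Int.toNat_of_nonneg (by linarith [(mem_Icc.1 hℓ).1])
  rw [h, mul_comm]

theorem natDegree_le : (shiftedSymbol r p a).natDegree ≤ r + p :=
  natDegree_sum_le_of_forall_le _ _ fun ℓ hℓ =>
    (natDegree_C_mul_le _ _).trans (by rw [natDegree_X_pow]; have := (mem_Icc.1 hℓ).2; omega)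

theorem coeff_r_add_p : (shiftedSymbol r p a).coeff (r + p) = a p := by
  rw [shiftedSymbol, finsetSum_coeff, sum_eq_single (p : ℤ)]
  · rw [coeff_C_mul_X_pow, if_pos (by omega)]
  · intro ℓ hℓ hne
    have := mem_Icc.1 hℓ
    rw [coeff_C_mul_X_pow, if_neg (by omega)]
  · intro h
    exact absurd (mem_Icc.2 ⟨by omega, le_rfl⟩) h

end shiftedSymbol

/-- Counting of unstable roots: under the ℓ²-stability condition, the consistency
conditions of order ≥ 1 with `λa > 0`, and the assumption that the characteristic
polynomial `A` has `1` as its unique root on the unit circle, the number of roots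
of `A` (with multiplicity) lying strictly outside the closed unit disk equals `p`. -/
theorem count_unstable_roots (r p : ℕ) (a lam : ℝ) (ha : 0 < a) (hlam : 0 < lam)
    (coef : ℤ → ℝ) (hnorm : coef (-(r : ℤ)) * coef (p : ℤ) ≠ 0)
    (hstab : ∀ θ : ℝ,
      ‖(∑ ℓ ∈ Finset.Icc (-(r : ℤ)) (p : ℤ),
        (coef ℓ : ℂ) * Complex.exp (Complex.I * ℓ * θ))‖ ≤ 1)
    (hcons0 : ∑ ℓ ∈ Finset.Icc (-(r : ℤ)) (p : ℤ), coef ℓ = 1)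
    (hcons1 : ∑ ℓ ∈ Finset.Icc (-(r : ℤ)) (p : ℤ), (ℓ : ℝ) * coef ℓ = -(lam * a))
    (A : Polynomial ℂ)
    (hA : A = (∑ ℓ ∈ Finset.Icc (-(r : ℤ)) (p : ℤ),
        Polynomial.C ((coef ℓ : ℂ)) * Polynomial.X ^ (ℓ + (r : ℤ)).toNat)
      - Polynomial.X ^ r)
    (hcircle : ∀ z : ℂ, A.IsRoot z → ‖z‖ = 1 → z = 1) :
    Multiset.card (A.roots.filter fun z => 1 < ‖z‖) = p := by
  set B := shiftedSymbol r p fun ℓ => (coef ℓ : ℂ)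
  replace hA : A = B - X ^ r := hA
  have h1 : A.IsRoot 1 := by
    rw [IsRoot, hA, eval_sub, shiftedSymbol.eval_one, ← ofReal_sum, hcons0]
    simp
  have hA' : A.derivative.eval 1 = ((-(lam * a) : ℝ) : ℂ) := by
    rw [hA, derivative_sub, eval_sub, shiftedSymbol.eval_one_derivative, ← hcons1]
    have : (r : ℂ) = ∑ ℓ ∈ Icc (-(r : ℤ)) p, (r : ℂ) * coef ℓ := by
      rw [← mul_sum, ← ofReal_sum, hcons0, ofReal_one, mul_one]
    simp only [derivative_X_pow, eval_mul, eval_C, eval_pow, eval_X, one_pow, mul_one]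
    rw [this, ← sum_sub_distrib]
    push_cast
    exact sum_congr rfl fun ℓ _ => by ring
  have hinside := A.card_roots_norm_le_one r
    (fun z hz => by simpa [hA] using shiftedSymbol.norm_eval_le_one _ hstab hz) h1
    (by rw [hA']; simpa using mul_pos hlam ha) hcircle
  have hdeg : A.natDegree ≤ r + p := by
    rw [hA]
    exact (natDegree_sub_le _ _).trans (max_le (shiftedSymbol.natDegree_le _) (by simp))
  have hdeg' : 0 < p → r + p ≤ A.natDegree := fun hp => le_natDegree_of_ne_zero <| by
    rw [hA, coeff_sub, shiftedSymbol.coeff_r_add_p, coeff_X_pow, if_neg (by omega), sub_zero]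
    exact_mod_cast right_ne_zero_of_mul hnorm
  have hsplit := Multiset.filter_add_not (fun z : ℂ => 1 < ‖z‖) A.roots
  simp only [not_lt] at hsplit
  have := congrArg Multiset.card hsplit
  rw [Multiset.card_add, hinside, IsAlgClosed.card_roots_eq_natDegree] at this
  omega
end

section
/- Injectivity of the extrapolation boundary matrix: let κ_1, ..., κ_{τ+} be distinct nonzero complex numbers with κ_σ ≠ 1 for all σ, with multiplicities μ_σ summing to p. Suppose polynomials p_σ ∈ ℂ[X] with deg p_σ ≤ μ_σ - 1 satisfy, for some integer k_b ≥ 0, Σ_σ Q_σ(ℓ) κ_σ^ℓ = 0 for ℓ = 1, ..., p, where Q_σ(X) := Σ_{k=0}^{k_b} (1-κ_σ^{-1})^k p_σ[X-k_b, ..., X-k]. Then all p_σ = 0. Equivalently, the only sequence of the form v_j = Σ_σ p_σ(j) κ_σ^{j} satisfying (D_-^{k_b} v)_ℓ = 0 for ℓ = 1, ..., p is v = 0. -/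
/-!
`D₋` maps a term `p(j) κ^j` to `(p - κ⁻¹ p(X - 1))(j) κ^j`, and for `κ ≠ 1` the map
`p ↦ p - κ⁻¹ p(X - 1)` is injective and does not raise the degree. So it suffices to show that
an exponential polynomial `∑ Q_σ(ℓ) κ_σ^ℓ` with `deg Q_σ < μ_σ` which vanishes at `∑ μ_σ`
consecutive integers has all `Q_σ = 0`. This goes by induction on `∑ μ_σ`: for a fixed `ρ`, the
operator `v_ℓ ↦ v_ℓ - κ_ρ v_{ℓ-1}` acts on the component `σ` by `Q ↦ Q - (κ_ρ / κ_σ) Q(X - 1)`,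
which lowers the degree for `σ = ρ`, is injective for `σ ≠ ρ`, and uses up one interpolation point.
-/

open Polynomial

/-- The backward difference operator `(D₋ v)_j = v_j - v_{j-1}`. -/
def DminusSeq (v : ℤ → ℂ) : ℤ → ℂ := fun j => v j - v (j - 1)

section TwistedBackDiff

variable {K : Type*} [Field K]

noncomputable def twistedBackDiff (r : K) : K[X] →ₗ[K] K[X] :=
  LinearMap.id - r • taylor (-1)

theorem twistedBackDiff_apply (r : K) (Q : K[X]) :
    twistedBackDiff r Q = Q - r • taylor (-1) Q := rfl

theorem eval_twistedBackDiff (r : K) (Q : K[X]) (x : K) :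
    (twistedBackDiff r Q).eval x = Q.eval x - r * Q.eval (x - 1) := by
  rw [twistedBackDiff_apply, eval_sub, eval_smul, taylor_eval, smul_eq_mul, sub_eq_add_neg x]

theorem degree_twistedBackDiff_le (r : K) (Q : K[X]) :
    (twistedBackDiff r Q).degree ≤ Q.degree := by
  rw [twistedBackDiff_apply]
  refine (degree_sub_le _ _).trans (max_le le_rfl ?_)
  exact (degree_smul_le _ _).trans (degree_taylor _ _).le

theorem degree_iterate_twistedBackDiff_le (r : K) (k : ℕ) (Q : K[X]) :
    ((twistedBackDiff r)^[k] Q).degree ≤ Q.degree := by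
  induction k with
  | zero => rfl
  | succ k ih =>
    rw [Function.iterate_succ_apply']
    exact (degree_twistedBackDiff_le r _).trans ih

theorem coeff_twistedBackDiff_natDegree (r : K) (Q : K[X]) :
    (twistedBackDiff r Q).coeff Q.natDegree = (1 - r) * Q.leadingCoeff := by
  rw [twistedBackDiff_apply, coeff_sub, coeff_smul, coeff_taylor_natDegree, coeff_natDegree,
    smul_eq_mul]
  ring

theorem twistedBackDiff_injective {r : K} (hr : r ≠ 1) :
    Function.Injective (twistedBackDiff r) := by
  refine (injective_iff_map_eq_zero _).2 fun Q hQ => ?_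
  have hcoeff := coeff_twistedBackDiff_natDegree r Q
  rw [hQ, coeff_zero, eq_comm, mul_eq_zero, sub_eq_zero] at hcoeff
  exact leadingCoeff_eq_zero.1 (hcoeff.resolve_left (Ne.symm hr))

theorem degree_twistedBackDiff_one_lt {Q : K[X]} {n : ℕ} (hQ : Q.degree < n) :
    (twistedBackDiff 1 Q).degree < (n - 1 : ℕ) := by
  rcases eq_or_ne Q 0 with rfl | hQ0
  · simp
  have hlt : (twistedBackDiff 1 Q).degree < Q.degree := by
    rw [twistedBackDiff_apply, one_smul]
    exact degree_sub_lt_left (degree_taylor _ _).symm hQ0 (leadingCoeff_taylor _ _).symm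
  rw [degree_eq_natDegree hQ0, Nat.cast_lt] at hQ
  refine hlt.trans_le ?_
  rw [degree_eq_natDegree hQ0, Nat.cast_le]
  omega

end TwistedBackDiff

theorem Polynomial.eq_zero_of_degree_lt_of_eval_intCast_eq_zero {K : Type*} [Field K]
    [CharZero K] {Q : K[X]} {a : ℤ} {n : ℕ} (hQ : Q.degree < n)
    (hvan : ∀ ℓ : ℤ, a ≤ ℓ → ℓ < a + n → Q.eval (ℓ : K) = 0) : Q = 0 := by
  refine eq_zero_of_degree_lt_of_eval_index_eq_zero (Finset.Ico a (a + n))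
    Int.cast_injective.injOn ?_ fun ℓ hℓ => ?_
  · simpa using hQ
  · rw [Finset.mem_Ico] at hℓ
    exact hvan ℓ hℓ.1 hℓ.2

section ExpPolySeq

variable {K ι : Type*} [Field K] [Fintype ι]

def expPolySeq (κ : ι → K) (Q : ι → K[X]) (ℓ : ℤ) : K :=
  ∑ i, (Q i).eval (ℓ : K) * κ i ^ ℓ

theorem expPolySeq_sub_mul_expPolySeq_sub_one {κ : ι → K} (hκ : ∀ i, κ i ≠ 0)
    (Q : ι → K[X]) (c : K) (ℓ : ℤ) :
    expPolySeq κ Q ℓ - c * expPolySeq κ Q (ℓ - 1) =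
      expPolySeq κ (fun i => twistedBackDiff (c / κ i) (Q i)) ℓ := by
  simp only [expPolySeq, Finset.mul_sum, ← Finset.sum_sub_distrib, eval_twistedBackDiff,
    zpow_sub_one₀ (hκ _), Int.cast_sub, Int.cast_one]
  refine Finset.sum_congr rfl fun i _ => ?_
  field_simp

theorem eq_zero_of_expPolySeq_eq_zero [CharZero K] {κ : ι → K}
    (hκ : Function.Injective κ) (hκ0 : ∀ i, κ i ≠ 0) {μ : ι → ℕ} {Q : ι → K[X]}
    (hQ : ∀ i, (Q i).degree < μ i) {a : ℤ}
    (hvan : ∀ ℓ : ℤ, a ≤ ℓ → ℓ < a + ↑(∑ i, μ i) → expPolySeq κ Q ℓ = 0) : Q = 0 := by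
  classical
  induction hn : ∑ i, μ i generalizing μ Q a with
  | zero =>
    funext i
    have hμ : μ i ≤ 0 := hn ▸ Finset.single_le_sum (by simp) (Finset.mem_univ i)
    simpa [Nat.le_zero.1 hμ] using hQ i
  | succ n ih =>
    funext i₀
    rcases Nat.eq_zero_or_pos (μ i₀) with hμ | hμ
    · simpa [hμ] using hQ i₀
    have hsum : ∑ i, Function.update μ i₀ (μ i₀ - 1) i = n := by
      have h₁ := Finset.sum_update_of_mem (Finset.mem_univ i₀) μ (μ i₀ - 1)
      have h₂ := Finset.sum_eq_add_sum_sdiff_singleton_of_mem (Finset.mem_univ i₀) μ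
      omega
    set Q' : ι → K[X] := fun i => twistedBackDiff (κ i₀ / κ i) (Q i)
    have hQ' : Q' = 0 := by
      refine ih (a := a + 1) (fun i => ?_) (fun ℓ h₁ h₂ => ?_) hsum
      · rcases eq_or_ne i i₀ with rfl | hi
        · simpa [Q', div_self (hκ0 i)] using degree_twistedBackDiff_one_lt (hQ i)
        · rw [Function.update_of_ne hi]
          exact (degree_twistedBackDiff_le _ _).trans_lt (hQ i)
      · rw [hsum] at h₂
        rw [← expPolySeq_sub_mul_expPolySeq_sub_one hκ0, hvan ℓ (by omega) (by omega),
          hvan (ℓ - 1) (by omega) (by omega), mul_zero, sub_zero]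
    have hothers : ∀ i ≠ i₀, Q i = 0 := fun i hi =>
      twistedBackDiff_injective (div_ne_one_of_ne (hκ.ne hi).symm) <| by
        simpa [Q'] using congrFun hQ' i
    have hμn : μ i₀ ≤ n + 1 := hn ▸ Finset.single_le_sum (by simp) (Finset.mem_univ i₀)
    refine eq_zero_of_degree_lt_of_eval_intCast_eq_zero (a := a) (n := n + 1) ?_ fun ℓ h₁ h₂ => ?_
    · exact (hQ i₀).trans_le (Nat.cast_le.2 hμn)
    · have h := hvan ℓ h₁ (by rwa [hn])
      rw [expPolySeq, Fintype.sum_eq_single i₀ fun i hi => by simp [hothers i hi]] at h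
      exact (mul_eq_zero.1 h).resolve_right (zpow_ne_zero _ (hκ0 i₀))

end ExpPolySeq

theorem DminusSeq_expPolySeq {ι : Type*} [Fintype ι] {κ : ι → ℂ} (hκ : ∀ i, κ i ≠ 0)
    (Q : ι → ℂ[X]) :
    DminusSeq (expPolySeq κ Q) =
      expPolySeq κ (fun i => twistedBackDiff (κ i)⁻¹ (Q i)) := by
  funext j
  simpa [DminusSeq, one_div] using expPolySeq_sub_mul_expPolySeq_sub_one hκ Q 1 j

theorem iterate_DminusSeq_expPolySeq {ι : Type*} [Fintype ι] {κ : ι → ℂ} (hκ : ∀ i, κ i ≠ 0)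
    (k : ℕ) (Q : ι → ℂ[X]) :
    DminusSeq^[k] (expPolySeq κ Q) =
      expPolySeq κ (fun i => (twistedBackDiff (κ i)⁻¹)^[k] (Q i)) := by
  induction k generalizing Q with
  | zero => rfl
  | succ k ih =>
    simp only [Function.iterate_succ_apply, DminusSeq_expPolySeq hκ, ih]

/-- Injectivity of the extrapolation boundary matrix: with distinct nonzero
`κ_σ ≠ 1` and polynomials `p_σ` of degree `≤ μ_σ - 1`, `∑ μ_σ = p`, the only
sequence `v_j = ∑_σ p_σ(j) κ_σ^j` satisfying the extrapolation conditions
`(D₋^{k_b} v)_ℓ = 0` for `ℓ = 1, …, p` is `v = 0`, i.e. all `p_σ = 0`. -/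
theorem extrapolation_boundary_matrix_injective (τ p kb : ℕ)
    (κ : Fin τ → ℂ) (hdist : Function.Injective κ)
    (hne0 : ∀ σ, κ σ ≠ 0) (hne1 : ∀ σ, κ σ ≠ 1)
    (μ : Fin τ → ℕ) (hμ : ∀ σ, 1 ≤ μ σ) (hsum : ∑ σ, μ σ = p)
    (P : Fin τ → Polynomial ℂ) (hdeg : ∀ σ, (P σ).natDegree ≤ μ σ - 1)
    (v : ℤ → ℂ) (hv : ∀ j : ℤ, v j = ∑ σ, (P σ).eval (j : ℂ) * κ σ ^ j)
    (hbc : ∀ ℓ : ℤ, 1 ≤ ℓ → ℓ ≤ (p : ℤ) → (DminusSeq^[kb] v) ℓ = 0) :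
    ∀ σ, P σ = 0 := by
  have hv : v = expPolySeq κ P := funext hv
  have hdeg' : ∀ σ, (P σ).degree < μ σ := fun σ =>
    degree_le_natDegree.trans_lt (Nat.cast_lt.2 (Nat.lt_of_le_pred (hμ σ) (hdeg σ)))
  have hzero : (fun σ => (twistedBackDiff (κ σ)⁻¹)^[kb] (P σ)) = 0 := by
    refine eq_zero_of_expPolySeq_eq_zero hdist hne0
      (fun σ => (degree_iterate_twistedBackDiff_le _ _ _).trans_lt (hdeg' σ)) (a := 1)
      fun ℓ h₁ h₂ => ?_
    rw [← iterate_DminusSeq_expPolySeq hne0, ← hv]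
    exact hbc ℓ h₁ (by omega)
  intro σ
  refine (twistedBackDiff_injective (inv_ne_one.2 (hne1 σ))).iterate kb ?_
  rw [congrFun hzero σ, Pi.zero_apply, Function.iterate_fixed (map_zero _)]
end

section
/- Interior consistency error estimate in ℓ²: let the scheme coefficients satisfy Σ_ℓ ℓ^m a_ℓ = (-λa)^m for m = 0, ..., k. Then there is C > 0 (depending on the coefficients, λ, a, k) such that for all ξ ∈ ℝ and Δx > 0, |e^{-iaλΔxξ} - Σ_{ℓ=-r}^p a_ℓ e^{iℓΔxξ}| ≤ C (Δx|ξ|)^{k+1}. Consequently, for f ∈ H^{k+1}(ℝ), (1/Δt)‖f(· - aΔt) - Σ_ℓ a_ℓ f(· + ℓΔx)‖_{L²(ℝ)} ≤ C' Δx^k ‖f‖_{H^{k+1}(ℝ)} where Δt = λΔx. -/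
/-!
The consistency relations say that the scheme reproduces Taylor polynomials of degree `k`
exactly, so the defect `f (x - aλΔx) - ∑ a_ℓ f (x + ℓΔx)` is the same combination of Taylor
remainders `R_k f h x` with `|h| ≤ C Δx`. In integral form,
`R_k f h x = ∫₀ʰ (h - s)ᵏ / k! • f⁽ᵏ⁺¹⁾ (x + s) ds`, which is bounded pointwise by
`‖f⁽ᵏ⁺¹⁾‖_∞ |h|ᵏ⁺¹` and, by Cauchy–Schwarz on `[0, h]`, Tonelli and translation invariance of
Lebesgue measure, in `L²` by `‖f⁽ᵏ⁺¹⁾‖_{L²} |h|ᵏ⁺¹`. The symbol estimate is the pointwise bound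
for the plane wave `y ↦ e^{iξy}` at `x = 0`, so no Fourier transform is needed.
-/

open MeasureTheory Finset
open scoped Nat ENNReal Interval

theorem sq_eLpNorm_two {α ε : Type*} [MeasurableSpace α] [ENorm ε] {μ : Measure α} (f : α → ε) :
    eLpNorm f 2 μ ^ 2 = ∫⁻ a, ‖f a‖ₑ ^ 2 ∂μ := by
  simpa using eLpNorm_nnreal_pow_eq_lintegral (f := f) (μ := μ) (p := 2) two_ne_zero

theorem sq_lintegral_le_measure_univ_mul {α : Type*} [MeasurableSpace α] {ν : Measure α}
    {u : α → ℝ≥0∞} (hu : AEMeasurable u ν) :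
    (∫⁻ a, u a ∂ν) ^ 2 ≤ ν Set.univ * ∫⁻ a, u a ^ 2 ∂ν := by
  have h := ENNReal.lintegral_mul_le_Lp_mul_Lq ν Real.HolderConjugate.two_two hu
    (aemeasurable_const (b := 1))
  simp only [Pi.mul_apply, mul_one, ENNReal.one_rpow, lintegral_const, one_mul] at h
  calc (∫⁻ a, u a ∂ν) ^ 2
      ≤ ((∫⁻ a, u a ^ (2 : ℝ) ∂ν) ^ (1 / 2 : ℝ) * ν Set.univ ^ (1 / 2 : ℝ)) ^ 2 := by gcongr
    _ = ν Set.univ * ∫⁻ a, u a ^ 2 ∂ν := by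
      rw [mul_pow, ← ENNReal.rpow_natCast, ← ENNReal.rpow_natCast (ν _ ^ _), ← ENNReal.rpow_mul,
        ← ENNReal.rpow_mul]
      norm_num [mul_comm]

theorem lintegral_lintegral_comp_add {G : Type*} [MeasurableSpace G] [AddGroup G]
    [MeasurableAdd₂ G] {μ ν : Measure G} [SFinite μ] [SFinite ν] [μ.IsAddRightInvariant]
    {u : G → ℝ≥0∞} (hu : Measurable u) :
    ∫⁻ x, ∫⁻ s, u (x + s) ∂ν ∂μ = ν Set.univ * ∫⁻ x, u x ∂μ := by
  rw [lintegral_lintegral_swap (f := fun x s => u (x + s))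
    (hu.comp measurable_add).aemeasurable]
  simp_rw [lintegral_add_right_eq_self (μ := μ) u]
  rw [lintegral_const, mul_comm]

variable {E : Type*} [NormedAddCommGroup E] [NormedSpace ℝ E]

theorem eLpNorm_intervalIntegral_smul_comp_add_le {g : ℝ → E} (hg : Continuous g) {w : ℝ → ℝ}
    {B h : ℝ} (hw : ∀ s ∈ Ι 0 h, |w s| ≤ B) :
    eLpNorm (fun x => ∫ s in 0..h, w s • g (x + s)) 2 volume
      ≤ ENNReal.ofReal (B * |h|) * eLpNorm g 2 volume := by
  set ν := volume.restrict (Ι 0 h)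
  have hν : ν Set.univ = ENNReal.ofReal |h| := by simp [ν, Real.volume_uIoc]
  have hmeas : ∀ x, Measurable fun s => ‖g (x + s)‖ₑ :=
    fun x => (hg.comp (continuous_const_add x)).enorm.measurable
  have hpoint : ∀ x, ‖∫ s in 0..h, w s • g (x + s)‖ₑ
      ≤ ENNReal.ofReal B * ∫⁻ s, ‖g (x + s)‖ₑ ∂ν := by
    intro x
    rw [← ofReal_norm, intervalIntegral.norm_integral_eq_norm_integral_uIoc, ofReal_norm,
      ← lintegral_const_mul _ (hmeas x)]
    refine (enorm_integral_le_lintegral_enorm _).trans (setLIntegral_mono' measurableSet_uIoc ?_)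
    intro s hs
    rw [enorm_smul, Real.enorm_eq_ofReal_abs]
    gcongr
    exact hw s hs
  rw [← ENNReal.pow_le_pow_left_iff two_ne_zero, mul_pow, sq_eLpNorm_two, sq_eLpNorm_two]
  calc ∫⁻ x, ‖∫ s in 0..h, w s • g (x + s)‖ₑ ^ 2
      ≤ ∫⁻ x, ENNReal.ofReal B ^ 2 * (ν Set.univ * ∫⁻ s, ‖g (x + s)‖ₑ ^ 2 ∂ν) := by
        refine lintegral_mono fun x => (pow_le_pow_left₀ bot_le (hpoint x) 2).trans ?_
        rw [mul_pow]
        gcongr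
        exact sq_lintegral_le_measure_univ_mul (hmeas x).aemeasurable
    _ = ENNReal.ofReal B ^ 2 * ν Set.univ * (ν Set.univ * ∫⁻ x, ‖g x‖ₑ ^ 2) := by
        rw [lintegral_const_mul' _ _ (by simp), lintegral_const_mul' _ _ (by simp [hν]),
          lintegral_lintegral_comp_add (hg.enorm.measurable.pow_const 2), mul_assoc]
    _ = ENNReal.ofReal (B * |h|) ^ 2 * ∫⁻ x, ‖g x‖ₑ ^ 2 := by
        rw [ENNReal.ofReal_mul' (abs_nonneg h), hν]
        ring

theorem abs_sub_pow_div_factorial_le {h s : ℝ} (hs : s ∈ Ι 0 h) (k : ℕ) :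
    |(h - s) ^ k / k !| ≤ |h| ^ k := by
  have hsh : |h - s| ≤ |h| := by
    rcases Set.mem_uIoc.1 hs with ⟨h1, h2⟩ | ⟨h1, h2⟩ <;> rw [abs_le] <;> constructor <;>
      cases abs_cases h <;> linarith
  rw [abs_div, abs_pow, Nat.abs_cast]
  calc |h - s| ^ k / k ! ≤ |h - s| ^ k :=
        div_le_self (by positivity) (Nat.one_le_cast.2 (Nat.factorial_pos k))
    _ ≤ |h| ^ k := pow_le_pow_left₀ (abs_nonneg _) hsh k

noncomputable def taylorRemainder (k : ℕ) (f : ℝ → E) (h x : ℝ) : E :=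
  f (x + h) - ∑ m ∈ range (k + 1), (h ^ m / m !) • iteratedDeriv m f x

theorem continuous_taylorRemainder {k : ℕ} {f : ℝ → E} (hf : ContDiff ℝ (k + 1 : ℕ) f) (h : ℝ) :
    Continuous (taylorRemainder k f h) :=
  (hf.continuous.comp (continuous_add_const h)).sub <| continuous_finsetSum _ fun m hm =>
    (hf.continuous_iteratedDeriv m (by simp at hm; norm_cast; omega)).const_smul _

section TaylorRemainder

variable [CompleteSpace E] {k : ℕ} {f : ℝ → E}

theorem taylorRemainder_eq_intervalIntegral (hf : ContDiff ℝ (k + 1 : ℕ) f) (h x : ℝ) :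
    taylorRemainder k f h x =
      ∫ s in 0..h, ((h - s) ^ k / k !) • iteratedDeriv (k + 1) f (x + s) := by
  rcases eq_or_ne h 0 with rfl | hh
  · simp [taylorRemainder, Finset.sum_range_succ']
  have hs : UniqueDiffOn ℝ [[x, x + h]] := uniqueDiffOn_uIcc (by simpa using hh)
  have hderiv : ∀ m ≤ k + 1, Set.EqOn (iteratedDerivWithin m f [[x, x + h]]) (iteratedDeriv m f)
      [[x, x + h]] := fun m hm y hy =>
    iteratedDerivWithin_eq_iteratedDeriv hs (hf.contDiffAt.of_le (by exact_mod_cast hm)) hy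
  have htaylor := taylor_integral_remainder (x₀ := x) (x := x + h) hf.contDiffOn
  rw [taylor_within_apply,
    intervalIntegral.integral_congr (fun t ht => by rw [hderiv _ le_rfl ht])] at htaylor
  have hshift := intervalIntegral.integral_comp_add_left
    (fun t => ((x + h - t) ^ k / k !) • iteratedDeriv (k + 1) f t) x (a := 0) (b := h)
  simp only [add_sub_add_left_eq_sub, add_zero] at hshift
  rw [taylorRemainder, hshift, ← htaylor]
  congr 1
  refine Finset.sum_congr rfl fun m hm => ?_
  rw [hderiv m (by simp at hm; omega) Set.left_mem_uIcc]
  simp [div_eq_inv_mul]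

theorem norm_taylorRemainder_le (hf : ContDiff ℝ (k + 1 : ℕ) f) {M : ℝ}
    (hM : ∀ y, ‖iteratedDeriv (k + 1) f y‖ ≤ M) (h x : ℝ) :
    ‖taylorRemainder k f h x‖ ≤ M * |h| ^ (k + 1) := by
  rw [taylorRemainder_eq_intervalIntegral hf]
  refine (intervalIntegral.norm_integral_le_of_norm_le_const (C := |h| ^ k * M)
    fun s hs => ?_).trans_eq (by rw [sub_zero, pow_succ]; ring)
  rw [norm_smul, Real.norm_eq_abs]
  exact mul_le_mul (abs_sub_pow_div_factorial_le hs k) (hM _) (norm_nonneg _) (by positivity)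

theorem eLpNorm_taylorRemainder_le (hf : ContDiff ℝ (k + 1 : ℕ) f) (h : ℝ) :
    eLpNorm (taylorRemainder k f h) 2 volume
      ≤ ENNReal.ofReal (|h| ^ (k + 1)) * eLpNorm (iteratedDeriv (k + 1) f) 2 volume := by
  have hbound := eLpNorm_intervalIntegral_smul_comp_add_le (h := h)
    (hf.continuous_iteratedDeriv (k + 1) le_rfl) fun s hs => abs_sub_pow_div_factorial_le hs k
  rw [← pow_succ] at hbound
  rwa [← funext (taylorRemainder_eq_intervalIntegral hf h)] at hbound

end TaylorRemainder

def truncationErrorConstant {ι : Type*} (k : ℕ) (s : Finset ι) (c τ : ι → ℝ) (μ : ℝ) : ℝ :=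
  |μ| ^ (k + 1) + ∑ i ∈ s, |c i| * |τ i| ^ (k + 1)

section Scheme

variable {ι : Type*} {s : Finset ι} {c τ : ι → ℝ} {μ : ℝ} {k : ℕ}

theorem truncationErrorConstant_nonneg : 0 ≤ truncationErrorConstant k s c τ μ := by
  unfold truncationErrorConstant
  positivity

theorem sub_sum_smul_eq_taylorRemainder (hmom : ∀ m ≤ k, ∑ i ∈ s, c i * τ i ^ m = μ ^ m)
    (f : ℝ → E) (Δx x : ℝ) :
    f (x + μ * Δx) - ∑ i ∈ s, c i • f (x + τ i * Δx) =
      taylorRemainder k f (μ * Δx) x - ∑ i ∈ s, c i • taylorRemainder k f (τ i * Δx) x := by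
  have hpoly : ∑ i ∈ s, c i • ∑ m ∈ range (k + 1), ((τ i * Δx) ^ m / m !) • iteratedDeriv m f x
      = ∑ m ∈ range (k + 1), ((μ * Δx) ^ m / m !) • iteratedDeriv m f x := by
    simp_rw [Finset.smul_sum, smul_smul]
    rw [Finset.sum_comm]
    refine Finset.sum_congr rfl fun m hm => ?_
    rw [← Finset.sum_smul, mul_pow, ← hmom m (by simp at hm; omega), Finset.sum_mul,
      Finset.sum_div]
    congr 1
    refine Finset.sum_congr rfl fun i _ => ?_
    ring
  simp only [taylorRemainder, smul_sub, Finset.sum_sub_distrib, hpoly]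
  abel

variable [CompleteSpace E] {f : ℝ → E}

theorem norm_sub_sum_smul_le (hmom : ∀ m ≤ k, ∑ i ∈ s, c i * τ i ^ m = μ ^ m)
    (hf : ContDiff ℝ (k + 1 : ℕ) f) {M : ℝ} (hM : ∀ y, ‖iteratedDeriv (k + 1) f y‖ ≤ M)
    (Δx x : ℝ) :
    ‖f (x + μ * Δx) - ∑ i ∈ s, c i • f (x + τ i * Δx)‖
      ≤ truncationErrorConstant k s c τ μ * M * |Δx| ^ (k + 1) := by
  rw [sub_sum_smul_eq_taylorRemainder hmom]
  calc _ ≤ ‖taylorRemainder k f (μ * Δx) x‖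
        + ∑ i ∈ s, |c i| * ‖taylorRemainder k f (τ i * Δx) x‖ := by
        refine (norm_sub_le _ _).trans ?_
        gcongr
        exact (norm_sum_le _ _).trans_eq (by simp [norm_smul])
    _ ≤ M * |μ * Δx| ^ (k + 1) + ∑ i ∈ s, |c i| * (M * |τ i * Δx| ^ (k + 1)) := by
        gcongr <;> exact norm_taylorRemainder_le hf hM _ x
    _ = truncationErrorConstant k s c τ μ * M * |Δx| ^ (k + 1) := by
        simp only [truncationErrorConstant, abs_mul, mul_pow, add_mul, Finset.sum_mul]
        congr 1
        · ring
        · exact Finset.sum_congr rfl fun i _ => by ring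

theorem eLpNorm_sub_sum_smul_le (hmom : ∀ m ≤ k, ∑ i ∈ s, c i * τ i ^ m = μ ^ m)
    (hf : ContDiff ℝ (k + 1 : ℕ) f) (Δx : ℝ) :
    eLpNorm (fun x => f (x + μ * Δx) - ∑ i ∈ s, c i • f (x + τ i * Δx)) 2 volume
      ≤ ENNReal.ofReal (truncationErrorConstant k s c τ μ * |Δx| ^ (k + 1))
        * eLpNorm (iteratedDeriv (k + 1) f) 2 volume := by
  simp_rw [sub_sum_smul_eq_taylorRemainder hmom f Δx]
  have hR := fun h => (continuous_taylorRemainder hf h).aestronglyMeasurable (μ := volume)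
  set N := eLpNorm (iteratedDeriv (k + 1) f) 2 volume
  calc _ ≤ eLpNorm (taylorRemainder k f (μ * Δx)) 2 volume
        + ∑ i ∈ s, ‖c i‖ₑ * eLpNorm (taylorRemainder k f (τ i * Δx)) 2 volume := by
        have hfun : (fun x => taylorRemainder k f (μ * Δx) x
            - ∑ i ∈ s, c i • taylorRemainder k f (τ i * Δx) x)
            = taylorRemainder k f (μ * Δx) - ∑ i ∈ s, c i • taylorRemainder k f (τ i * Δx) := by
          ext x; simp
        rw [hfun]
        refine (eLpNorm_sub_le (hR _) ?_ one_le_two).trans ?_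
        · exact Finset.aestronglyMeasurable_sum _ fun i _ => (hR _).const_smul _
        gcongr
        refine (eLpNorm_sum_le (fun i _ => (hR _).const_smul _) one_le_two).trans_eq ?_
        simp [eLpNorm_const_smul]
    _ ≤ ENNReal.ofReal (|μ * Δx| ^ (k + 1)) * N
        + ∑ i ∈ s, ENNReal.ofReal |c i| * (ENNReal.ofReal (|τ i * Δx| ^ (k + 1)) * N) := by
        gcongr with i
        · exact eLpNorm_taylorRemainder_le hf _
        · rw [Real.enorm_eq_ofReal_abs]
        · exact eLpNorm_taylorRemainder_le hf _
    _ = _ := by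
        rw [truncationErrorConstant, add_mul, ENNReal.ofReal_add (by positivity) (by positivity),
          Finset.sum_mul, ENNReal.ofReal_sum_of_nonneg (fun i _ => by positivity), add_mul,
          Finset.sum_mul]
        congr 1
        · rw [abs_mul, mul_pow]
        · refine Finset.sum_congr rfl fun i _ => ?_
          rw [← mul_assoc, ← ENNReal.ofReal_mul (abs_nonneg _), abs_mul, mul_pow, mul_assoc]

theorem toReal_eLpNorm_sub_sum_smul_le (hmom : ∀ m ≤ k, ∑ i ∈ s, c i * τ i ^ m = μ ^ m)
    (hf : ContDiff ℝ (k + 1 : ℕ) f) (hf' : MemLp (iteratedDeriv (k + 1) f) 2 volume) (Δx : ℝ) :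
    (eLpNorm (fun x => f (x + μ * Δx) - ∑ i ∈ s, c i • f (x + τ i * Δx)) 2 volume).toReal
      ≤ truncationErrorConstant k s c τ μ * |Δx| ^ (k + 1)
        * (eLpNorm (iteratedDeriv (k + 1) f) 2 volume).toReal := by
  have h := ENNReal.toReal_mono (ENNReal.mul_ne_top ENNReal.ofReal_ne_top hf'.eLpNorm_ne_top)
    (eLpNorm_sub_sum_smul_le hmom hf Δx)
  rwa [ENNReal.toReal_mul, ENNReal.toReal_ofReal
    (mul_nonneg truncationErrorConstant_nonneg (by positivity))] at h

end Scheme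

theorem iteratedDeriv_cexp_ofReal_mul (c : ℂ) (n : ℕ) :
    iteratedDeriv n (fun y : ℝ => Complex.exp (c * y)) =
      fun y : ℝ => c ^ n * Complex.exp (c * y) := by
  induction n with
  | zero => simp
  | succ n ih =>
    ext y
    rw [iteratedDeriv_succ, ih]
    refine HasDerivAt.deriv ?_
    refine ((((hasDerivAt_id y).ofReal_comp.const_mul c).cexp).const_mul (c ^ n)).congr_deriv ?_
    simp only [id, Complex.ofReal_one, mul_one, pow_succ]
    ring

theorem contDiff_cexp_ofReal_mul (c : ℂ) {n : WithTop ℕ∞} :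
    ContDiff ℝ n (fun y : ℝ => Complex.exp (c * y)) :=
  Complex.contDiff_exp.comp (contDiff_const.mul Complex.ofRealCLM.contDiff)

theorem norm_iteratedDeriv_cexp_I_mul (ξ : ℝ) (n : ℕ) (y : ℝ) :
    ‖iteratedDeriv n (fun y : ℝ => Complex.exp (Complex.I * ξ * y)) y‖ = |ξ| ^ n := by
  simp [iteratedDeriv_cexp_ofReal_mul, Complex.norm_exp]

theorem interior_consistency_error_general (r p k : ℕ) (a lam : ℝ) (hlam : 0 < lam)
    (coef : ℤ → ℝ)
    (hcons : ∀ m : ℕ, m ≤ k →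
      ∑ ℓ ∈ Finset.Icc (-(r : ℤ)) (p : ℤ), coef ℓ * (ℓ : ℝ) ^ m = (-(lam * a)) ^ m) :
    (∃ C > 0, ∀ (ξ Δx : ℝ), 0 < Δx →
      ‖Complex.exp (-(Complex.I * (a * lam * Δx * ξ)))
          - ∑ ℓ ∈ Finset.Icc (-(r : ℤ)) (p : ℤ),
              (coef ℓ : ℂ) * Complex.exp (Complex.I * (ℓ * Δx * ξ))‖
        ≤ C * (Δx * |ξ|) ^ (k + 1)) ∧
    (∃ C' > 0, ∀ Δx : ℝ, 0 < Δx → ∀ f : ℝ → ℂ,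
      ContDiff ℝ (k + 1 : ℕ) f →
      (∀ m : ℕ, m ≤ k + 1 → MemLp (iteratedDeriv m f) 2 volume) →
      (eLpNorm (fun x : ℝ => f (x - a * (lam * Δx))
          - ∑ ℓ ∈ Finset.Icc (-(r : ℤ)) (p : ℤ), (coef ℓ : ℂ) * f (x + ℓ * Δx))
        2 volume).toReal / (lam * Δx)
      ≤ C' * Δx ^ k *
          ∑ m ∈ Finset.range (k + 2), (eLpNorm (iteratedDeriv m f) 2 volume).toReal) := by
  set K := truncationErrorConstant k (Finset.Icc (-(r : ℤ)) p) coef (fun ℓ => ℓ) (-(lam * a))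
  have hK : 0 ≤ K := truncationErrorConstant_nonneg
  refine ⟨⟨K + 1, by positivity, fun ξ Δx hΔx => ?_⟩,
    ⟨K / lam + 1, by positivity, fun Δx hΔx f hf hf2 => ?_⟩⟩
  · have hwave := norm_sub_sum_smul_le hcons (contDiff_cexp_ofReal_mul (Complex.I * ξ))
      (fun y => (norm_iteratedDeriv_cexp_I_mul ξ (k + 1) y).le) Δx 0
    refine (Eq.trans_le ?_ hwave).trans ?_
    · congr 2
      · push_cast; ring_nf
      · refine Finset.sum_congr rfl fun ℓ _ => ?_
        rw [Complex.real_smul]; push_cast; ring_nf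
    · rw [abs_of_pos hΔx, mul_pow, mul_assoc, mul_comm (|ξ| ^ _)]
      gcongr
      linarith
  · set N := fun m => (eLpNorm (iteratedDeriv m f) 2 volume).toReal
    have hscheme : (eLpNorm (fun x : ℝ => f (x - a * (lam * Δx))
        - ∑ ℓ ∈ Finset.Icc (-(r : ℤ)) (p : ℤ), (coef ℓ : ℂ) * f (x + ℓ * Δx)) 2 volume).toReal
        ≤ K * Δx ^ (k + 1) * N (k + 1) := by
      convert toReal_eLpNorm_sub_sum_smul_le hcons hf (hf2 (k + 1) le_rfl) Δx using 4 with x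
      · simp_rw [Complex.real_smul]
        ring_nf
      · rw [abs_of_pos hΔx]
    have hN : N (k + 1) ≤ ∑ m ∈ Finset.range (k + 2), N m :=
      Finset.single_le_sum (f := N) (fun m _ => ENNReal.toReal_nonneg) (by simp)
    calc _ ≤ K * Δx ^ (k + 1) * N (k + 1) / (lam * Δx) := by gcongr
      _ = K / lam * Δx ^ k * N (k + 1) := by field_simp; ring
      _ ≤ _ := by gcongr; linarith

/-- Interior consistency error estimate: under the order-`k` consistency relations,
the symbol error satisfies `|e^{-iaλΔxξ} - ∑ a_ℓ e^{iℓΔxξ}| ≤ C (Δx|ξ|)^{k+1}`, and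
consequently the `L²` interior consistency error is `O(Δx^k)` with respect to the
`H^{k+1}` norm of the data. -/
theorem interior_consistency_error (r p k : ℕ) (a lam : ℝ) (ha : 0 < a) (hlam : 0 < lam)
    (coef : ℤ → ℝ)
    (hcons : ∀ m : ℕ, m ≤ k →
      ∑ ℓ ∈ Finset.Icc (-(r : ℤ)) (p : ℤ), coef ℓ * (ℓ : ℝ) ^ m = (-(lam * a)) ^ m) :
    (∃ C > 0, ∀ (ξ Δx : ℝ), 0 < Δx →
      ‖Complex.exp (-(Complex.I * (a * lam * Δx * ξ)))
          - ∑ ℓ ∈ Finset.Icc (-(r : ℤ)) (p : ℤ),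
              (coef ℓ : ℂ) * Complex.exp (Complex.I * (ℓ * Δx * ξ))‖
        ≤ C * (Δx * |ξ|) ^ (k + 1)) ∧
    (∃ C' > 0, ∀ Δx : ℝ, 0 < Δx → ∀ f : ℝ → ℂ,
      ContDiff ℝ (k + 1 : ℕ) f →
      (∀ m : ℕ, m ≤ k + 1 → MemLp (iteratedDeriv m f) 2 volume) →
      (eLpNorm (fun x : ℝ => f (x - a * (lam * Δx))
          - ∑ ℓ ∈ Finset.Icc (-(r : ℤ)) (p : ℤ), (coef ℓ : ℂ) * f (x + ℓ * Δx))
        2 volume).toReal / (lam * Δx)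
      ≤ C' * Δx ^ k *
          ∑ m ∈ Finset.range (k + 2), (eLpNorm (iteratedDeriv m f) 2 volume).toReal) :=
  interior_consistency_error_general r p k a lam hlam coef hcons
end

section
/- Boundary Taylor-remainder estimate: let k ≥ 1, g ∈ H^k((0, T+rΔx/a)) (extended suitably), a > 0, Δx > 0, and for ℓ ∈ {1-r, ..., 0} set E_ℓ^n := Σ_{κ=0}^{k-1} [Δx^κ/((κ+1)!(-a)^κ)](ℓ^{κ+1} - (ℓ-1)^{κ+1}) g^{(κ)}(t^n) - (1/Δx)∫_{(ℓ-1)Δx}^{ℓΔx} g(t^n - x/a) dx. Then Σ_{0 ≤ n ≤ T/Δt - 1} Δt Σ_{ℓ=1-r}^0 (E_ℓ^n)² ≤ C Δx^{2k} ‖g^{(k)}‖²_{L²}, with C independent of T, g, Δx. -/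
open MeasureTheory Finset

/-!
Because `∫ x^κ` over the cell `((ℓ-1)Δx, ℓΔx]` equals `Δx^{κ+1}(ℓ^{κ+1} - (ℓ-1)^{κ+1})/(κ+1)`, the
ILW value is exactly the cell average of the degree-`(k-1)` Taylor polynomial at `tⁿ` of
`x ↦ g(tⁿ - x/a)`. So `E_ℓⁿ` is the cell average of a Taylor remainder at `u = -x/a ∈ [0, L]`,
`L = rΔx/a`; its integral form gives `|E_ℓⁿ| ≤ L^{k-1}/(k-1)! ∫_{tⁿ}^{tⁿ+L} |g^{(k)}|`, and
Cauchy–Schwarz gives `(E_ℓⁿ)² ≤ L^{2k-1}/((k-1)!)² ∫_{tⁿ}^{tⁿ+L} |g^{(k)}|²`. The windows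
`[tⁿ, tⁿ + L]` cover each point at most `M = ⌈r/(aλ)⌉` times, so the sum over `n` is at most
`Δt · r · M · L^{2k-1}/((k-1)!)² · ‖g^{(k)}‖²`, which is `O(Δx^{2k})` since `Δt = λΔx`.
-/

theorem taylor_integral_remainder_of_contDiff {f : ℝ → ℝ} {n : ℕ}
    (hf : ContDiff ℝ (n + 1 : ℕ) f) (x₀ x : ℝ) :
    f x - ∑ j ∈ range (n + 1), (x - x₀) ^ j / j.factorial * iteratedDeriv j f x₀ =
      ∫ t in x₀..x, (x - t) ^ n / n.factorial * iteratedDeriv (n + 1) f t := by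
  rcases eq_or_ne x₀ x with rfl | hne
  · simp [sum_range_succ']
  have hwithin : ∀ j ≤ n + 1, ∀ y ∈ Set.uIcc x₀ x,
      iteratedDerivWithin j f (Set.uIcc x₀ x) y = iteratedDeriv j f y := fun j hj y hy =>
    iteratedDerivWithin_eq_iteratedDeriv (uniqueDiffOn_uIcc hne)
      (hf.contDiffAt.of_le (by exact_mod_cast hj)) hy
  have h := taylor_integral_remainder (x := x) (x₀ := x₀) hf.contDiffOn
  rw [taylor_within_apply] at h
  convert h using 1
  · congr 1
    refine sum_congr rfl fun j hj => ?_
    rw [hwithin j (by simp at hj; omega) x₀ Set.left_mem_uIcc, smul_eq_mul]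
    ring
  · exact intervalIntegral.integral_congr fun t ht => by
      simp only [hwithin (n + 1) le_rfl t ht, smul_eq_mul]

theorem sq_intervalIntegral_le_mul_integral_sq {f : ℝ → ℝ} {a b : ℝ} (hab : a ≤ b)
    (hf : IntervalIntegrable f volume a b)
    (hf2 : IntervalIntegrable (fun x => f x ^ 2) volume a b) :
    (∫ x in a..b, f x) ^ 2 ≤ (b - a) * ∫ x in a..b, f x ^ 2 := by
  rcases hab.eq_or_lt with rfl | hlt
  · simp
  set I := ∫ x in a..b, f x with hI
  have hexpand : ∫ x in a..b, ((b - a) * f x - I) ^ 2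
      = (b - a) * ((b - a) * (∫ x in a..b, f x ^ 2) - I ^ 2) := by
    have hsq : ∀ x, ((b - a) * f x - I) ^ 2
        = (b - a) ^ 2 * f x ^ 2 - 2 * (b - a) * I * f x + I ^ 2 := fun x => by ring
    simp_rw [hsq]
    rw [intervalIntegral.integral_add ((hf2.const_mul _).sub (hf.const_mul _))
        intervalIntegrable_const,
      intervalIntegral.integral_sub (hf2.const_mul _) (hf.const_mul _),
      intervalIntegral.integral_const_mul, intervalIntegral.integral_const_mul,
      intervalIntegral.integral_const, smul_eq_mul, ← hI]
    ring
  have hnonneg : 0 ≤ ∫ x in a..b, ((b - a) * f x - I) ^ 2 :=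
    intervalIntegral.integral_nonneg hab fun _ _ => sq_nonneg _
  rw [hexpand] at hnonneg
  linarith [nonneg_of_mul_nonneg_right hnonneg (sub_pos.2 hlt)]

theorem integral_sq_eq_toReal_eLpNorm_sq {f : ℝ → ℝ} (hf : MemLp f 2 volume) :
    ∫ x, f x ^ 2 = (eLpNorm f 2 volume).toReal ^ 2 := by
  rw [← Lp.norm_toLp f hf, ← real_inner_self_eq_norm_sq, L2.inner_def]
  refine integral_congr_ae ?_
  filter_upwards [hf.coeFn_toLp] with x hx
  simp [hx, sq]

theorem sum_intervalIntegral_window_le {F : ℝ → ℝ} (hF : Integrable F) (hF0 : 0 ≤ F) {h L : ℝ} {M : ℕ}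
    (hh : 0 ≤ h) (hL : 0 ≤ L) (hLM : L ≤ M * h) (N : ℕ) :
    ∑ n ∈ range N, ∫ s in n * h..n * h + L, F s ≤ M * ∫ s, F s := by
  have hsplit : ∀ c K : ℕ, ∑ i ∈ range K, ∫ s in (c + i : ℕ) * h..(c + i + 1 : ℕ) * h, F s
      = ∫ s in (c : ℕ) * h..(c + K : ℕ) * h, F s := fun c K =>
    intervalIntegral.sum_integral_adjacent_intervals (a := fun i => ((c + i : ℕ) : ℝ) * h)
      fun _ _ => hF.intervalIntegrable
  have hle_integral : ∀ c d : ℝ, c ≤ d → ∫ s in c..d, F s ≤ ∫ s, F s := fun c d hcd => by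
    rw [intervalIntegral.integral_of_le hcd]
    exact setIntegral_le_integral hF (.of_forall hF0)
  calc ∑ n ∈ range N, ∫ s in n * h..n * h + L, F s
      ≤ ∑ n ∈ range N, ∑ i ∈ range M, ∫ s in (n + i : ℕ) * h..(n + i + 1 : ℕ) * h, F s := by
        refine sum_le_sum fun n _ => ?_
        rw [hsplit]
        refine intervalIntegral.integral_mono_interval le_rfl (by linarith) ?_
          (.of_forall fun s => hF0 s) hF.intervalIntegrable
        push_cast
        linarith
    _ = ∑ i ∈ range M, ∑ n ∈ range N, ∫ s in (i + n : ℕ) * h..(i + n + 1 : ℕ) * h, F s := by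
        rw [sum_comm]
        exact sum_congr rfl fun i _ => sum_congr rfl fun n _ => by rw [Nat.add_comm n i]
    _ ≤ ∑ i ∈ range M, ∫ s, F s := by
        refine sum_le_sum fun i _ => ?_
        rw [hsplit]
        exact hle_integral _ _ (by gcongr; omega)
    _ = M * ∫ s, F s := by rw [sum_const, card_range, nsmul_eq_mul]

theorem abs_sub_taylor_le_of_contDiff {f : ℝ → ℝ} {n : ℕ} (hf : ContDiff ℝ (n + 1 : ℕ) f)
    {x₀ u L : ℝ} (hu : 0 ≤ u) (huL : u ≤ L) :
    |f (x₀ + u) - ∑ j ∈ range (n + 1), u ^ j / j.factorial * iteratedDeriv j f x₀|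
      ≤ L ^ n / n.factorial * ∫ t in x₀..x₀ + L, |iteratedDeriv (n + 1) f t| := by
  have hcont : Continuous (iteratedDeriv (n + 1) f) := hf.continuous_iteratedDeriv _ le_rfl
  have hrem := taylor_integral_remainder_of_contDiff hf x₀ (x₀ + u)
  rw [add_sub_cancel_left] at hrem
  rw [hrem, ← intervalIntegral.integral_const_mul]
  calc |∫ t in x₀..x₀ + u, (x₀ + u - t) ^ n / n.factorial * iteratedDeriv (n + 1) f t|
      ≤ ∫ t in x₀..x₀ + u, |(x₀ + u - t) ^ n / n.factorial * iteratedDeriv (n + 1) f t| :=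
        intervalIntegral.abs_integral_le_integral_abs (by linarith)
    _ ≤ ∫ t in x₀..x₀ + u, L ^ n / n.factorial * |iteratedDeriv (n + 1) f t| := by
        refine intervalIntegral.integral_mono_on (by linarith)
          (Continuous.intervalIntegrable (by fun_prop) _ _)
          (Continuous.intervalIntegrable (by fun_prop) _ _) fun t ht => ?_
        rw [abs_mul, abs_div, abs_pow, Nat.abs_cast, abs_of_nonneg (by linarith [ht.2])]
        gcongr
        · linarith [ht.2]
        · linarith [ht.1]
    _ ≤ ∫ t in x₀..x₀ + L, L ^ n / n.factorial * |iteratedDeriv (n + 1) f t| :=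
        intervalIntegral.integral_mono_interval le_rfl (by linarith) (by linarith)
          (.of_forall fun t => mul_nonneg (by have := hu.trans huL; positivity) (abs_nonneg _))
          (Continuous.intervalIntegrable (by fun_prop) _ _)

noncomputable def cellAverage (Δx ℓ : ℝ) (φ : ℝ → ℝ) : ℝ :=
  (1 / Δx) * ∫ x in (ℓ - 1) * Δx..ℓ * Δx, φ x

noncomputable def ilwBoundaryValue (k : ℕ) (a Δx : ℝ) (g : ℝ → ℝ) (t ℓ : ℝ) : ℝ :=
  ∑ j ∈ range k, Δx ^ j / ((j + 1).factorial * (-a) ^ j) *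
    (ℓ ^ (j + 1) - (ℓ - 1) ^ (j + 1)) * iteratedDeriv j g t

theorem abs_cellAverage_le {Δx ℓ C : ℝ} {φ : ℝ → ℝ} (hΔx : 0 < Δx)
    (hφ : ∀ x ∈ Set.Ioc ((ℓ - 1) * Δx) (ℓ * Δx), |φ x| ≤ C) :
    |cellAverage Δx ℓ φ| ≤ C := by
  have hle : (ℓ - 1) * Δx ≤ ℓ * Δx := by nlinarith
  have h := intervalIntegral.norm_integral_le_of_norm_le_const
    (by rwa [Set.uIoc_of_le hle] : ∀ x ∈ Set.uIoc ((ℓ - 1) * Δx) (ℓ * Δx), ‖φ x‖ ≤ C)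
  rw [show |ℓ * Δx - (ℓ - 1) * Δx| = Δx by rw [abs_of_nonneg (by linarith)]; ring] at h
  rw [cellAverage, abs_mul, abs_of_pos (one_div_pos.2 hΔx)]
  calc 1 / Δx * |∫ x in (ℓ - 1) * Δx..ℓ * Δx, φ x| ≤ 1 / Δx * (C * Δx) := by gcongr; exact h
    _ = C := by field_simp

theorem cellAverage_neg_div_pow_div_factorial (a : ℝ) {Δx : ℝ} (hΔx : Δx ≠ 0) (ℓ : ℝ) (j : ℕ) :
    cellAverage Δx ℓ (fun x => (-x / a) ^ j / j.factorial)
      = Δx ^ j / ((j + 1).factorial * (-a) ^ j) * (ℓ ^ (j + 1) - (ℓ - 1) ^ (j + 1)) := by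
  have hx : ∀ x : ℝ, (-x / a) ^ j / j.factorial = 1 / ((-a) ^ j * j.factorial) * x ^ j :=
    fun x => by rw [neg_div, ← div_neg, div_pow]; ring
  simp_rw [cellAverage, hx, intervalIntegral.integral_const_mul, integral_pow, mul_pow,
    Nat.factorial_succ]
  push_cast
  field_simp
  ring

theorem ilwBoundaryValue_eq_cellAverage_taylor (k : ℕ) (a : ℝ) {Δx : ℝ} (hΔx : Δx ≠ 0)
    (g : ℝ → ℝ) (t ℓ : ℝ) :
    ilwBoundaryValue k a Δx g t ℓ = cellAverage Δx ℓ
      (fun x => ∑ j ∈ range k, (-x / a) ^ j / j.factorial * iteratedDeriv j g t) := by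
  rw [cellAverage, intervalIntegral.integral_finsetSum fun j _ =>
    Continuous.intervalIntegrable (by fun_prop) _ _, mul_sum]
  refine sum_congr rfl fun j _ => ?_
  rw [intervalIntegral.integral_mul_const, ← mul_assoc, ← cellAverage,
    cellAverage_neg_div_pow_div_factorial a hΔx]

theorem sq_ilwBoundaryValue_sub_cellAverage_le {g : ℝ → ℝ} {m : ℕ}
    (hg : ContDiff ℝ (m + 1 : ℕ) g) {a Δx t ℓ L : ℝ} (ha : 0 < a) (hΔx : 0 < Δx) (hℓ : ℓ ≤ 0)
    (hL : (1 - ℓ) * Δx ≤ a * L) :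
    (ilwBoundaryValue (m + 1) a Δx g t ℓ - cellAverage Δx ℓ (fun x => g (t - x / a))) ^ 2
      ≤ L ^ (2 * m + 1) / (m.factorial : ℝ) ^ 2 *
          ∫ s in t..t + L, iteratedDeriv (m + 1) g s ^ 2 := by
  have hcont : Continuous (iteratedDeriv (m + 1) g) := hg.continuous_iteratedDeriv _ le_rfl
  have hL0 : 0 ≤ L := (pos_of_mul_pos_right (by nlinarith) ha.le).le
  have herr : |ilwBoundaryValue (m + 1) a Δx g t ℓ - cellAverage Δx ℓ (fun x => g (t - x / a))|
      ≤ L ^ m / m.factorial * ∫ s in t..t + L, |iteratedDeriv (m + 1) g s| := by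
    have hP : Continuous fun x : ℝ =>
        ∑ j ∈ range (m + 1), (-x / a) ^ j / j.factorial * iteratedDeriv j g t := by fun_prop
    have hG : Continuous fun x : ℝ => g (t - x / a) := hg.continuous.comp (by fun_prop)
    rw [ilwBoundaryValue_eq_cellAverage_taylor _ _ hΔx.ne', cellAverage, cellAverage, ← mul_sub,
      ← intervalIntegral.integral_sub (hP.intervalIntegrable _ _) (hG.intervalIntegrable _ _),
      ← cellAverage]
    refine abs_cellAverage_le hΔx fun x hx => ?_
    have hu : 0 ≤ -x / a := div_nonneg (by nlinarith [hx.2]) ha.le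
    have huL : -x / a ≤ L := by rw [div_le_iff₀ ha]; nlinarith [hx.1]
    rw [abs_sub_comm, sub_eq_add_neg t, ← neg_div]
    exact abs_sub_taylor_le_of_contDiff hg hu huL
  have hcs := sq_intervalIntegral_le_mul_integral_sq (le_add_of_nonneg_right hL0)
    (hcont.abs.intervalIntegrable t (t + L)) ((hcont.abs.pow 2).intervalIntegrable t (t + L))
  simp only [sq_abs, add_sub_cancel_left] at hcs
  calc _ ≤ (L ^ m / m.factorial * ∫ s in t..t + L, |iteratedDeriv (m + 1) g s|) ^ 2 := by
        rw [← sq_abs]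
        exact pow_le_pow_left₀ (abs_nonneg _) herr 2
    _ ≤ (L ^ m / m.factorial) ^ 2 * (L * ∫ s in t..t + L, iteratedDeriv (m + 1) g s ^ 2) := by
        rw [mul_pow]
        gcongr
    _ = _ := by ring

theorem sum_sq_ilwBoundaryValue_sub_cellAverage_le {g : ℝ → ℝ} {m : ℕ}
    (hg : ContDiff ℝ (m + 1 : ℕ) g) {a Δx : ℝ} (ha : 0 < a) (hΔx : 0 < Δx) (r : ℕ) (t : ℝ) :
    ∑ ℓ ∈ Icc (1 - (r : ℤ)) 0,
        (ilwBoundaryValue (m + 1) a Δx g t ℓ - cellAverage Δx ℓ (fun x => g (t - x / a))) ^ 2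
      ≤ r * ((r * Δx / a) ^ (2 * m + 1) / (m.factorial : ℝ) ^ 2 *
          ∫ s in t..t + r * Δx / a, iteratedDeriv (m + 1) g s ^ 2) := by
  have hcell : ∀ ℓ ∈ Icc (1 - (r : ℤ)) 0,
      (ilwBoundaryValue (m + 1) a Δx g t ℓ - cellAverage Δx ℓ (fun x => g (t - x / a))) ^ 2
        ≤ (r * Δx / a) ^ (2 * m + 1) / (m.factorial : ℝ) ^ 2 *
          ∫ s in t..t + r * Δx / a, iteratedDeriv (m + 1) g s ^ 2 := fun ℓ hℓ => by
    rw [mem_Icc] at hℓ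
    have hℓr : (1 : ℝ) - r ≤ ℓ := by exact_mod_cast hℓ.1
    refine sq_ilwBoundaryValue_sub_cellAverage_le hg ha hΔx (by exact_mod_cast hℓ.2) ?_
    rw [mul_div_cancel₀ _ ha.ne']
    nlinarith
  refine (sum_le_card_nsmul _ _ _ hcell).trans_eq ?_
  rw [Int.card_Icc, nsmul_eq_mul]
  simp

/-- Boundary Taylor-remainder estimate for the inverse Lax-Wendroff ghost cell values:
the quadratic boundary errors accumulated over the time steps are bounded by
`C Δx^{2k} ‖g^{(k)}‖²_{L²}`, with `C` independent of `T`, `g` and `Δx`. -/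
theorem boundary_taylor_remainder_estimate (r k : ℕ) (hk : 1 ≤ k)
    (a lam : ℝ) (ha : 0 < a) (hlam : 0 < lam) :
    ∃ C > 0, ∀ T : ℝ, 1 ≤ T → ∀ Δx : ℝ, 0 < Δx → ∀ g : ℝ → ℝ,
      ContDiff ℝ (k : ℕ) g → MemLp (iteratedDeriv k g) 2 volume →
      ∑ n ∈ Finset.range ⌊T / (lam * Δx)⌋₊, (lam * Δx) *
          ∑ ℓ ∈ Finset.Icc (1 - (r : ℤ)) 0,
            ((∑ j ∈ Finset.range k,
                Δx ^ j / ((j + 1).factorial * (-a) ^ j) *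
                  ((ℓ : ℝ) ^ (j + 1) - ((ℓ : ℝ) - 1) ^ (j + 1)) *
                  iteratedDeriv j g (n * (lam * Δx)))
              - (1 / Δx) *
                  ∫ x in (((ℓ : ℝ) - 1) * Δx)..((ℓ : ℝ) * Δx),
                    g (n * (lam * Δx) - x / a)) ^ 2
        ≤ C * Δx ^ (2 * k) * (eLpNorm (iteratedDeriv k g) 2 volume).toReal ^ 2 := by
  obtain ⟨m, rfl⟩ : ∃ m, k = m + 1 := ⟨k - 1, by omega⟩
  set M := ⌈(r : ℝ) / (a * lam)⌉₊
  refine ⟨lam * r * M * ((r : ℝ) / a) ^ (2 * m + 1) / (m.factorial : ℝ) ^ 2 + 1, by positivity, ?_⟩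
  intro T _ Δx hΔx g hg hf
  have hwindow : (r : ℝ) * Δx / a ≤ M * (lam * Δx) := calc
    (r : ℝ) * Δx / a = (r : ℝ) / (a * lam) * (lam * Δx) := by field_simp
    _ ≤ M * (lam * Δx) := by gcongr; exact Nat.le_ceil _
  set K := lam * Δx * r * ((r : ℝ) * Δx / a) ^ (2 * m + 1) / (m.factorial : ℝ) ^ 2
  calc _ ≤ ∑ n ∈ range ⌊T / (lam * Δx)⌋₊, K * ∫ s in n * (lam * Δx)..n * (lam * Δx) + r * Δx / a,
          iteratedDeriv (m + 1) g s ^ 2 := by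
        refine sum_le_sum fun n _ => ?_
        refine (mul_le_mul_of_nonneg_left (sum_sq_ilwBoundaryValue_sub_cellAverage_le hg ha hΔx r
          (n * (lam * Δx))) (by positivity)).trans_eq ?_
        ring
    _ ≤ K * (M * ∫ s, iteratedDeriv (m + 1) g s ^ 2) := by
        rw [← mul_sum]
        gcongr
        exact sum_intervalIntegral_window_le hf.integrable_sq (fun _ => sq_nonneg _)
          (by positivity) (by positivity) hwindow _
    _ = (lam * r * M * ((r : ℝ) / a) ^ (2 * m + 1) / (m.factorial : ℝ) ^ 2)
          * Δx ^ (2 * (m + 1)) * (eLpNorm (iteratedDeriv (m + 1) g) 2 volume).toReal ^ 2 := by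
        rw [integral_sq_eq_toReal_eLpNorm_sq hf]
        ring
    _ ≤ _ := by gcongr; linarith
end
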